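/- arXiv:1005.5087 — 5 statements merged into one kernel-verified Lean document; each statement's English description precedes it below -/
import Mathlib

section
/- Let N ≥ 1 and q_1, ..., q_{N-1} be complex numbers. Define the N×N matrix Q by Q_{ij} = ∏_{k=min(i,j)}^{max(i,j)-1} q_k (with Q_{ii} = 1, the empty product). Then det Q = (1 - q_1²)(1 - q_2²)···(1 - q_{N-1}²). -/
/-!
Subtracting `q n` times row `n` from row `n + 1` turns the last row of the `(n + 2) × (n + 2)`
matrix into `(0, …, 0, 1 - q n ^ 2)`, because every entry of row `n + 1` left of the diagonal is
`q n` times the entry above it. Expanding along that row leaves the `(n + 1) × (n + 1)` matrix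
of the same shape, so the determinant follows by induction.
-/

open Finset

theorem Finset.prod_Ico_min_max_succ {M : Type*} [CommMonoid M] (q : ℕ → M) {j n : ℕ}
    (h : j ≤ n) :
    ∏ k ∈ Ico (min j (n + 1)) (max j (n + 1)), q k
      = q n * ∏ k ∈ Ico (min j n) (max j n), q k := by
  rw [min_eq_left h, max_eq_right h, min_eq_left (by omega), max_eq_right (by omega),
    prod_Ico_succ_top h, mul_comm]

namespace Matrix

variable {R : Type*} [CommRing R]

theorem det_succ_of_row_last_castSucc_eq_zero {n : ℕ} (A : Matrix (Fin (n + 1)) (Fin (n + 1)) R)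
    (h : ∀ j : Fin n, A (Fin.last n) j.castSucc = 0) :
    A.det = A (Fin.last n) (Fin.last n) * (A.submatrix Fin.castSucc Fin.castSucc).det := by
  rw [det_succ_row A (Fin.last n), Fin.sum_univ_castSucc]
  simp [h, ← two_mul]

/-- With `q` constant equal to `ρ` this is the Kac–Murdock–Szegő matrix `ρ ^ |i - j|`. -/
def kmsMatrix (q : ℕ → R) (n : ℕ) : Matrix (Fin n) (Fin n) R :=
  of fun i j => ∏ k ∈ Ico (min i.val j.val) (max i.val j.val), q k

variable (q : ℕ → R)

theorem kmsMatrix_last_castSucc (n : ℕ) (j : Fin (n + 1)) :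
    kmsMatrix q (n + 2) (Fin.last (n + 1)) j.castSucc
      = q n * kmsMatrix q (n + 2) (Fin.last n).castSucc j.castSucc := by
  simpa [kmsMatrix, min_comm, max_comm] using prod_Ico_min_max_succ q (Nat.lt_succ_iff.mp j.isLt)

theorem det_kmsMatrix_succ (n : ℕ) :
    (kmsMatrix q (n + 1)).det = ∏ k ∈ range n, (1 - q k ^ 2) := by
  induction n with
  | zero => simp [kmsMatrix]
  | succ n ih =>
    set M := kmsMatrix q (n + 2)
    have hne : Fin.last (n + 1) ≠ (Fin.last n).castSucc := (Fin.castSucc_lt_last _).ne'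
    set M' := M.updateRow (Fin.last (n + 1))
      (M (Fin.last (n + 1)) + (-q n) • M (Fin.last n).castSucc)
    have hM' : M.det = M'.det := (det_updateRow_add_smul_self M hne _).symm
    have hrow : ∀ j : Fin (n + 1), M' (Fin.last (n + 1)) j.castSucc = 0 := fun j => by
      simp [M', M, kmsMatrix_last_castSucc]
    have hcorner : M' (Fin.last (n + 1)) (Fin.last (n + 1)) = 1 - q n ^ 2 := by
      simp [M', M, kmsMatrix, sq, sub_eq_add_neg]
    have hminor : M'.submatrix Fin.castSucc Fin.castSucc = kmsMatrix q (n + 1) := by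
      ext i j
      exact congrFun (updateRow_ne (Fin.castSucc_lt_last i).ne) j.castSucc
    rw [hM', det_succ_of_row_last_castSucc_eq_zero M' hrow, hcorner, hminor, ih, prod_range_succ,
      mul_comm]

end Matrix

theorem stmt_0_general (N : ℕ) (q : ℕ → ℂ) :
    (Matrix.of fun i j : Fin N =>
        ∏ k ∈ Finset.Ico (min i.val j.val) (max i.val j.val), q k).det
      = ∏ k ∈ Finset.range (N - 1), (1 - q k ^ 2) := by
  cases N with
  | zero => simp
  | succ n => exact Matrix.det_kmsMatrix_succ q n

/-- Determinant of the matrix `Q` with entries `Q i j = ∏_{k=min i j}^{max i j - 1} q k`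
equals `∏_{k=0}^{N-2} (1 - q k ^ 2)`. -/
theorem stmt_0 (N : ℕ) (hN : 1 ≤ N) (q : ℕ → ℂ) :
    (Matrix.of fun i j : Fin N =>
        ∏ k ∈ Finset.Ico (min i.val j.val) (max i.val j.val), q k).det
      = ∏ k ∈ Finset.range (N - 1), (1 - q k ^ 2) :=
  stmt_0_general N q
end

section
/- Let N ≥ 1 and q_1, ..., q_{N-1} be complex numbers with matrix Q as above. Q is invertible if and only if q_j ≠ 1 and q_j ≠ -1 for all j ∈ {1,...,N-1}. -/
/-!
Gaussian elimination factors `Q = L D Lᵀ`, where `L` is unit lower triangular with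
`L i m = q m * ⋯ * q (i - 1)` for `m ≤ i`, and
`D = diag(1, 1 - q 0 ^ 2, …, 1 - q (N - 2) ^ 2)`.
The factorization reduces to the telescoping identity `∑ m ≤ a, (L a m) ^ 2 * D m = 1`.
Hence `det Q = ∏ (1 - q k ^ 2)`, which vanishes exactly when some `q k = ±1`.
-/

open Finset Matrix

namespace SegmentProductMatrix

variable {R : Type*} [CommRing R] (q : ℕ → R) (N : ℕ)

def segmentProductMatrix : Matrix (Fin N) (Fin N) R :=
  of fun i j => ∏ k ∈ Ico (min i.val j.val) (max i.val j.val), q k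

def lowerFactor : Matrix (Fin N) (Fin N) R :=
  of fun i m => if m.val ≤ i.val then ∏ k ∈ Ico m.val i.val, q k else 0

def pivot : ℕ → R
  | 0 => 1
  | k + 1 => 1 - q k ^ 2

theorem sum_sq_prod_Ico_mul_pivot (a : ℕ) :
    ∑ m ∈ range (a + 1), (∏ k ∈ Ico m a, q k) ^ 2 * pivot q m = 1 := by
  induction a with
  | zero => simp [pivot]
  | succ a ih =>
    have hsplit : ∀ m ∈ range (a + 1),
        (∏ k ∈ Ico m (a + 1), q k) ^ 2 * pivot q m =
          q a ^ 2 * ((∏ k ∈ Ico m a, q k) ^ 2 * pivot q m) := by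
      intro m hm
      rw [prod_Ico_succ_top (Nat.lt_succ_iff.mp (mem_range.mp hm))]
      ring
    rw [sum_range_succ, sum_congr rfl hsplit, ← mul_sum, ih, Ico_self, prod_empty, pivot]
    ring

theorem prod_Ico_mul_prod_Ico {m i j : ℕ} (hm : m ≤ min i j) :
    (∏ k ∈ Ico m i, q k) * ∏ k ∈ Ico m j, q k =
      (∏ k ∈ Ico m (min i j), q k) ^ 2 * ∏ k ∈ Ico (min i j) (max i j), q k := by
  rcases le_total i j with h | h
  · rw [min_eq_left h, max_eq_right h] at *
    rw [← prod_Ico_consecutive _ hm h]; ring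
  · rw [min_eq_right h, max_eq_left h] at *
    rw [← prod_Ico_consecutive _ hm h]; ring

theorem lowerFactor_mul_diagonal_mul_transpose :
    lowerFactor q N * diagonal (fun m : Fin N => pivot q m) * (lowerFactor q N)ᵀ =
      segmentProductMatrix q N := by
  ext i j
  set a := min i.val j.val
  have ha : a + 1 ≤ N := Nat.succ_le_of_lt (min_lt_of_left_lt i.isLt)
  let f : ℕ → R := fun m =>
    (if m ≤ i.val then ∏ k ∈ Ico m i.val, q k else 0) * pivot q m *
    (if m ≤ j.val then ∏ k ∈ Ico m j.val, q k else 0)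
  have hf : ∀ m ∈ range (a + 1),
      f m = (∏ k ∈ Ico m a, q k) ^ 2 * pivot q m * ∏ k ∈ Ico a (max i.val j.val), q k := by
    intro m hm
    have hma : m ≤ a := Nat.lt_succ_iff.mp (mem_range.mp hm)
    simp only [f, if_pos (hma.trans (min_le_left _ _)), if_pos (hma.trans (min_le_right _ _))]
    rw [mul_right_comm, prod_Ico_mul_prod_Ico q hma]
    ring
  have hf0 : ∀ m ∈ range N, m ∉ range (a + 1) → f m = 0 := by
    intro m _ hm
    rcases le_or_gt m i.val with hi | hi
    · have hj : ¬ m ≤ j.val := fun hj => hm (mem_range.mpr (Nat.lt_succ_of_le (le_min hi hj)))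
      simp [f, hj]
    · simp [f, Nat.not_le.mpr hi]
  calc (lowerFactor q N * diagonal (fun m : Fin N => pivot q m) * (lowerFactor q N)ᵀ) i j
      = ∑ m : Fin N, f m := by
        rw [mul_apply]
        simp only [mul_diagonal, transpose_apply, lowerFactor, of_apply, f]
    _ = ∑ m ∈ range (a + 1), f m :=
        ((Fin.sum_univ_eq_sum_range f N).trans (sum_subset (range_subset_range.mpr ha) hf0).symm)
    _ = segmentProductMatrix q N i j := by
        rw [sum_congr rfl hf, ← sum_mul, sum_sq_prod_Ico_mul_pivot, one_mul]
        rfl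

theorem det_lowerFactor : (lowerFactor q N).det = 1 := by
  rw [det_of_isLowerTriangular _ fun i j hij => if_neg (Nat.not_le.mpr (hij : i.val < j.val))]
  simp [lowerFactor]

theorem prod_range_pivot :
    ∏ m ∈ range N, pivot q m = ∏ k ∈ range (N - 1), (1 - q k ^ 2) := by
  cases N with
  | zero => simp
  | succ n => simp [prod_range_succ', pivot]

theorem det_segmentProductMatrix :
    (segmentProductMatrix q N).det = ∏ k ∈ range (N - 1), (1 - q k ^ 2) := by
  rw [← lowerFactor_mul_diagonal_mul_transpose, det_mul, det_mul, det_transpose, det_lowerFactor,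
    det_diagonal, one_mul, mul_one, Fin.prod_univ_eq_prod_range (pivot q), prod_range_pivot]

theorem isUnit_segmentProductMatrix_iff {K : Type*} [Field K] (q : ℕ → K) (N : ℕ) :
    IsUnit (segmentProductMatrix q N) ↔ ∀ k < N - 1, q k ≠ 1 ∧ q k ≠ -1 := by
  simp only [isUnit_iff_isUnit_det, isUnit_iff_ne_zero, det_segmentProductMatrix,
    prod_ne_zero_iff, mem_range, sub_ne_zero, ne_comm (a := (1 : K)), Ne, sq_eq_one_iff, not_or]

end SegmentProductMatrix

theorem stmt_1_general (N : ℕ) (q : ℕ → ℂ) :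
    IsUnit (Matrix.of fun i j : Fin N =>
        ∏ k ∈ Finset.Ico (min i.val j.val) (max i.val j.val), q k)
      ↔ ∀ k < N - 1, q k ≠ 1 ∧ q k ≠ -1 :=
  SegmentProductMatrix.isUnit_segmentProductMatrix_iff q N

/-- The matrix `Q` is invertible iff all `q k ≠ ±1`. -/
theorem stmt_1 (N : ℕ) (hN : 1 ≤ N) (q : ℕ → ℂ) :
    IsUnit (Matrix.of fun i j : Fin N =>
        ∏ k ∈ Finset.Ico (min i.val j.val) (max i.val j.val), q k)
      ↔ ∀ k < N - 1, q k ≠ 1 ∧ q k ≠ -1 :=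
  stmt_1_general N q
end

section
/- Let R be the N×N matrix with entries R_{ij} = |s_i - s_j| where s_1 < s_2 < ... < s_N are real numbers (so R_{ij} = m_{min(i,j)} + ... + m_{max(i,j)-1} with m_k = s_{k+1} - s_k > 0). If w ∈ ℝ^N satisfies w_1 + ... + w_N = 0 and all entries of Rw are equal, then w = 0. -/
/-!
For consecutive points `s k < s k'`, every other point lies weakly on one side of both, so
`(R w) k' - (R w) k = (s k' - s k) (∑_{j ≤ k} w j - ∑_{j > k} w j)`. If `R w` is constant and
`∑ w = 0`, this forces every prefix sum `∑_{j ≤ k} w j` to vanish, and then so does each `w i`,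
being the difference of two consecutive prefix sums.
-/

open Finset

section

variable {ι M : Type*} [Fintype ι] [LinearOrder ι] [AddCommMonoid M]

lemma sum_filter_le_add_sum_filter_lt (w : ι → M) (k : ι) :
    ∑ j with j ≤ k, w j + ∑ j with k < j, w j = ∑ j, w j := by
  simpa only [not_le] using sum_filter_add_sum_filter_not univ (· ≤ k) w

lemma sum_filter_le_eq_sum_filter_lt_add (w : ι → M) (i : ι) :
    ∑ j with j ≤ i, w j = ∑ j with j < i, w j + w i := by
  rw [← sum_erase_add {j | j ≤ i} w (mem_filter.2 ⟨mem_univ i, le_rfl⟩)]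
  congr 2
  ext j
  simp [lt_iff_le_and_ne, and_comm]

end

variable {ι : Type*} [LinearOrder ι] {s w : ι → ℝ} {c : ℝ} {k k' : ι}

lemma abs_sub_sub_abs_sub_of_covBy (hs : Monotone s) (h : k ⋖ k') (j : ι) :
    |s k' - s j| - |s k - s j| = if j ≤ k then s k' - s k else s k - s k' := by
  have hkk' := hs h.le
  split_ifs with hj
  · have := hs hj
    rw [abs_of_nonneg (by linarith), abs_of_nonneg (by linarith)]
    ring
  · have := hs (h.le_iff_lt_right.2 (not_le.1 hj))
    rw [abs_of_nonpos (by linarith), abs_of_nonpos (by linarith)]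
    ring

variable [Fintype ι]

lemma sum_abs_sub_mul_sub_of_covBy (hs : Monotone s) (h : k ⋖ k') (w : ι → ℝ) :
    ∑ j, |s k' - s j| * w j - ∑ j, |s k - s j| * w j =
      (s k' - s k) * (∑ j with j ≤ k, w j - ∑ j with k < j, w j) := by
  simp_rw [← sum_sub_distrib, ← sub_mul, abs_sub_sub_abs_sub_of_covBy hs h, ite_mul, sum_ite,
    not_le, ← mul_sum]
  ring

lemma sum_filter_le_eq_zero_of_covBy (hs : StrictMono s) (hsum : ∑ j, w j = 0)
    (hrow : ∀ i, ∑ j, |s i - s j| * w j = c) (h : k ⋖ k') : ∑ j with j ≤ k, w j = 0 := by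
  have hgt : ∑ j with k < j, w j = -∑ j with j ≤ k, w j := by
    linarith [sum_filter_le_add_sum_filter_lt w k]
  have hdiff := sum_abs_sub_mul_sub_of_covBy hs.monotone h w
  rw [hrow, hrow, sub_self, hgt, sub_neg_eq_add] at hdiff
  have := (mul_eq_zero.1 hdiff.symm).resolve_left (sub_pos.2 (hs h.lt)).ne'
  linarith

lemma sum_filter_le_eq_zero (hs : StrictMono s) (hsum : ∑ j, w j = 0)
    (hrow : ∀ i, ∑ j, |s i - s j| * w j = c) (i : ι) : ∑ j with j ≤ i, w j = 0 := by
  by_cases hi : IsMax i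
  · rwa [filter_true_of_mem fun j _ => hi.isTop j]
  · obtain ⟨k, hk⟩ := exists_covBy_of_wellFoundedLT hi
    exact sum_filter_le_eq_zero_of_covBy hs hsum hrow hk

lemma sum_filter_lt_eq_zero (hs : StrictMono s) (hsum : ∑ j, w j = 0)
    (hrow : ∀ i, ∑ j, |s i - s j| * w j = c) (i : ι) : ∑ j with j < i, w j = 0 := by
  by_cases hi : IsMin i
  · simp [hi.not_lt]
  · obtain ⟨k, hk⟩ := exists_covBy_of_wellFoundedGT hi
    simp_rw [hk.lt_iff_le_left]
    exact sum_filter_le_eq_zero hs hsum hrow k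

/-- If `s` is strictly increasing and `R i j = |s i - s j|`, then the only zero-sum vector
`w` for which `R w` has all entries equal is `w = 0`. -/
theorem stmt_4 (N : ℕ) (s : Fin N → ℝ) (hs : StrictMono s) (w : Fin N → ℝ)
    (hsum : ∑ i, w i = 0) (c : ℝ)
    (hconst : ∀ i, (Matrix.of fun i j : Fin N => |s i - s j|).mulVec w i = c) :
    w = 0 := by
  have hrow : ∀ i, ∑ j, |s i - s j| * w j = c := fun i => by
    simpa [Matrix.mulVec, dotProduct] using hconst i
  funext i
  have h := sum_filter_le_eq_sum_filter_lt_add w i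
  rw [sum_filter_le_eq_zero hs hsum hrow, sum_filter_lt_eq_zero hs hsum hrow, zero_add] at h
  exact h.symm
end

section
/- Let A₀, A₁ ∈ ℂ^{n×n}, suppose A₀ has kernel K of dimension k with ℂ^n = K ⊕ Range(A₀) (i.e., the zero eigenvalue of A₀ is semisimple), and suppose the bilinear form (u, v) ↦ ⟨v, A₁ u⟩ restricted to Null(A₀) × Null(A₀*) is nondegenerate. Let A(θ) = A₀ + θA₁ + O(θ²) and h(θ) = h₀ + θh₁ + O(θ²) be analytic with h₀ ⊥ Null(A₀*). If A(θ) is invertible for θ ≠ 0 near 0, then the unique solution c(θ) of A(θ)c(θ) = h(θ) remains bounded as θ → 0. -/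
/-!
Let `B` be a matrix whose rows are the conjugates of a basis of `Null(A₀*)`, so that `B A₀ = 0`
and `B h₀ = 0`. Nondegeneracy says exactly that `c ↦ (A₀ c, B A₁ c)` is injective, hence
`‖c‖ ≤ M (‖A₀ c‖ + ‖B A₁ c‖)`. The equation `A(θ) c = h(θ)` gives `A₀ c = O(1) + O(θ) ‖c‖`, while
applying `B` removes its order-one part, so dividing by `θ` leaves
`B A₁ c = B h₁ + O(θ) (1 + ‖c‖)`. Together, `‖c‖ ≤ M (α + β |θ| ‖c‖)`, which bounds `c` as soon
as `M β |θ| ≤ 1/2`.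
-/

open Matrix

theorem Matrix.star_dotProduct_mulVec_eq_zero_of_mem_ker {R l m : Type*} [CommSemiring R]
    [StarRing R] [Fintype l] [Fintype m] {A : Matrix l m R} {v : l → R}
    (hv : v ∈ LinearMap.ker Aᴴ.mulVecLin) (x : m → R) : star v ⬝ᵥ (A *ᵥ x) = 0 := by
  have hstar : star v ᵥ* A = star (Aᴴ *ᵥ v) := by rw [star_mulVec, conjTranspose_conjTranspose]
  rw [dotProduct_mulVec, hstar, ← mulVecLin_apply, LinearMap.mem_ker.1 hv, star_zero,
    zero_dotProduct]

theorem Matrix.exists_mulVec_eq_zero_iff_forall_star_dotProduct_eq_zero {K m : Type*} [Field K]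
    [StarRing K] [Fintype m] (S : Submodule K (m → K)) :
    ∃ (k : ℕ) (B : Matrix (Fin k) m K), ∀ y, B *ᵥ y = 0 ↔ ∀ v ∈ S, star v ⬝ᵥ y = 0 := by
  let b := Module.finBasis K S
  refine ⟨_, of fun i => star (b i : m → K), fun y => ⟨fun hy v hv => ?_,
    fun hy => funext fun i => hy _ (b i).2⟩⟩
  have hvanish : (dotProductBilin K K (star y)).comp S.subtype = 0 := b.ext fun i => by
    change star y ⬝ᵥ b i = 0
    rw [star_dotProduct]
    exact (congrArg star (congrFun hy i)).trans (star_zero _)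
  rw [star_dotProduct, ← star_zero K]
  exact congrArg star (LinearMap.congr_fun hvanish ⟨v, hv⟩)

theorem Matrix.norm_mulVec_le_of_forall_norm_le {𝕜 l m : Type*} [NormedRing 𝕜] [Fintype l]
    [Fintype m] {M : Matrix l m 𝕜} {a : ℝ} (ha : 0 ≤ a) (hM : ∀ i j, ‖M i j‖ ≤ a)
    (x : m → 𝕜) : ‖M *ᵥ x‖ ≤ Fintype.card m * a * ‖x‖ := by
  refine (pi_norm_le_iff_of_nonneg (by positivity)).2 fun i => ?_
  calc ‖(M *ᵥ x) i‖ ≤ ∑ j, ‖M i j * x j‖ := norm_sum_le _ _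
    _ ≤ ∑ _j : m, a * ‖x‖ := Finset.sum_le_sum fun j _ =>
        (norm_mul_le _ _).trans (mul_le_mul (hM i j) (norm_le_pi_norm x j) (norm_nonneg _) ha)
    _ = Fintype.card m * a * ‖x‖ := by simp [mul_assoc]

theorem Matrix.norm_mulVec_add_smul_mulVec_sub_le {𝕜 m : Type*} [NormedField 𝕜] [Fintype m]
    {A A₀ A₁ : Matrix m m 𝕜} {h h₀ h₁ c : m → 𝕜} {t : 𝕜} {a b : ℝ} (ha : 0 ≤ a) (hb : 0 ≤ b)
    (hA : ∀ i j, ‖(A - A₀ - t • A₁) i j‖ ≤ a) (hh : ∀ i, ‖h i - h₀ i - t * h₁ i‖ ≤ b)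
    (hc : A *ᵥ c = h) :
    ‖A₀ *ᵥ c + t • A₁ *ᵥ c - (h₀ + t • h₁)‖ ≤ Fintype.card m * a * ‖c‖ + b := by
  have hsplit : A₀ *ᵥ c + t • A₁ *ᵥ c - (h₀ + t • h₁)
      = (h - h₀ - t • h₁) - (A - A₀ - t • A₁) *ᵥ c := by
    rw [sub_mulVec, sub_mulVec, smul_mulVec, hc]; abel
  have hrem : ‖h - h₀ - t • h₁‖ ≤ b := (pi_norm_le_iff_of_nonneg hb).2 hh
  rw [hsplit]
  linarith [norm_sub_le (h - h₀ - t • h₁) ((A - A₀ - t • A₁) *ᵥ c),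
    norm_mulVec_le_of_forall_norm_le ha hA c]

section Perturbation

variable {𝕜 V W X : Type*} [NontriviallyNormedField 𝕜] [CompleteSpace 𝕜]
  [NormedAddCommGroup V] [NormedSpace 𝕜 V] [FiniteDimensional 𝕜 V]
  [NormedAddCommGroup W] [NormedSpace 𝕜 W] [NormedAddCommGroup X] [NormedSpace 𝕜 X]

theorem exists_norm_le_mul_norm_add_norm (f : V →ₗ[𝕜] W) (g : V →ₗ[𝕜] X)
    (hfg : ∀ x, f x = 0 → g x = 0 → x = 0) :
    ∃ M > 0, ∀ x, ‖x‖ ≤ M * (‖f x‖ + ‖g x‖) := by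
  have hker : LinearMap.ker (f.prod g) = ⊥ :=
    LinearMap.ker_eq_bot'.2 fun x hx => hfg x (congrArg Prod.fst hx) (congrArg Prod.snd hx)
  obtain ⟨K, hK, hanti⟩ := (f.prod g).exists_antilipschitzWith hker
  refine ⟨K, hK, fun x => ?_⟩
  calc ‖x‖ ≤ K * ‖(f x, g x)‖ := by simpa [← Prod.zero_eq_mk] using hanti.le_mul_dist x 0
    _ ≤ K * (‖f x‖ + ‖g x‖) := by
      gcongr
      exact max_le (le_add_of_nonneg_right (norm_nonneg _)) (le_add_of_nonneg_left (norm_nonneg _))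

theorem exists_norm_le_of_norm_perturbed_sub_le (A₀ A₁ : V →L[𝕜] W) (G : W →L[𝕜] X)
    (hGA₀ : ∀ x, G (A₀ x) = 0) (hker : ∀ x, A₀ x = 0 → G (A₁ x) = 0 → x = 0)
    {h₀ : W} (hGh₀ : G h₀ = 0) (h₁ : W) {a b : ℝ} (ha : 0 ≤ a) (hb : 0 ≤ b) :
    ∃ C, ∃ θ₁ > 0, ∀ (t : 𝕜) (c : V), t ≠ 0 → ‖t‖ < θ₁ →
      ‖A₀ c + t • A₁ c - (h₀ + t • h₁)‖ ≤ ‖t‖ ^ 2 * (a * ‖c‖ + b) → ‖c‖ ≤ C := by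
  obtain ⟨M, hM, hcoer⟩ :=
    exists_norm_le_mul_norm_add_norm A₀.toLinearMap (G ∘L A₁).toLinearMap hker
  set α := ‖h₀‖ + ‖h₁‖ + b + ‖G‖ * (‖h₁‖ + b)
  set β := ‖A₁‖ + a + ‖G‖ * a
  refine ⟨2 * M * α, min 1 (1 / (2 * M * β + 1)), by positivity, fun t c ht0 htθ₁ hres => ?_⟩
  set r := A₀ c + t • A₁ c - (h₀ + t • h₁)
  have ht : 0 < ‖t‖ := norm_pos_iff.2 ht0
  have ht1 : ‖t‖ ≤ 1 := htθ₁.le.trans (min_le_left _ _)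
  have hsmall : M * β * ‖t‖ ≤ 1 / 2 := by
    have : ‖t‖ * (2 * M * β + 1) ≤ 1 :=
      (le_div_iff₀ (by positivity)).1 (by simpa using htθ₁.le.trans (min_le_right _ _))
    nlinarith [norm_nonneg t]
  have hr : ‖r‖ ≤ ‖t‖ * (a * ‖c‖ + b) :=
    hres.trans (mul_le_mul_of_nonneg_right (by nlinarith) (by positivity))
  have hA₀c : ‖A₀ c‖ ≤ ‖h₀‖ + ‖h₁‖ + b + ‖t‖ * (‖A₁‖ + a) * ‖c‖ := by
    have hsplit : A₀ c = h₀ + t • h₁ - t • A₁ c + r := by simp only [r]; abel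
    have h₁t : ‖t • h₁‖ ≤ ‖h₁‖ := by
      rw [norm_smul]; exact mul_le_of_le_one_left (norm_nonneg _) ht1
    have hA₁t : ‖t • A₁ c‖ ≤ ‖t‖ * (‖A₁‖ * ‖c‖) := by
      rw [norm_smul]; gcongr; exact A₁.le_opNorm c
    have hrt : ‖t‖ * (a * ‖c‖ + b) ≤ ‖t‖ * a * ‖c‖ + b := by nlinarith [norm_nonneg c]
    rw [hsplit]
    linarith [norm_add_le h₀ (t • h₁), norm_sub_le (h₀ + t • h₁) (t • A₁ c),
      norm_add_le (h₀ + t • h₁ - t • A₁ c) r]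
  have hGA₁c : ‖G (A₁ c)‖ ≤ ‖G‖ * (‖h₁‖ + b) + ‖t‖ * (‖G‖ * a) * ‖c‖ := by
    have hGr : t • (G (A₁ c) - G h₁) = G r := by
      simp only [r, map_sub, map_add, map_smul, hGA₀, hGh₀, smul_sub]; abel
    have hscaled : ‖t‖ * ‖G (A₁ c) - G h₁‖ ≤ ‖t‖ * (‖G‖ * (‖t‖ * (a * ‖c‖ + b))) := by
      calc ‖t‖ * ‖G (A₁ c) - G h₁‖ = ‖G r‖ := by rw [← hGr, norm_smul]
        _ ≤ ‖G‖ * (‖t‖ ^ 2 * (a * ‖c‖ + b)) := (G.le_opNorm r).trans (by gcongr)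
        _ = ‖t‖ * (‖G‖ * (‖t‖ * (a * ‖c‖ + b))) := by ring
    have hdiff := le_of_mul_le_mul_left hscaled ht
    have hGh₁ : ‖G h₁‖ ≤ ‖G‖ * ‖h₁‖ := G.le_opNorm h₁
    have hGb : ‖G‖ * (‖t‖ * b) ≤ ‖G‖ * b := by gcongr; exact mul_le_of_le_one_left hb ht1
    nlinarith [norm_le_insert' (G (A₁ c)) (G h₁)]
  have hc : ‖c‖ ≤ M * (α + β * ‖t‖ * ‖c‖) := by
    refine (hcoer c).trans (mul_le_mul_of_nonneg_left ?_ hM.le)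
    change ‖A₀ c‖ + ‖G (A₁ c)‖ ≤ _
    linarith
  nlinarith [norm_nonneg c]

end Perturbation

theorem stmt_9_general (n : ℕ) (A₀ A₁ : Matrix (Fin n) (Fin n) ℂ)
    (hnondeg : ∀ u ∈ LinearMap.ker A₀.mulVecLin,
        (∀ v ∈ LinearMap.ker A₀.conjTranspose.mulVecLin,
            dotProduct (star v) (A₁.mulVec u) = 0) → u = 0)
    (θ₀ : ℝ) (hθ₀ : 0 < θ₀)
    (A : ℝ → Matrix (Fin n) (Fin n) ℂ) (h : ℝ → Fin n → ℂ) (h₀ h₁ : Fin n → ℂ)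
    (CA : ℝ) (hA : ∀ θ : ℝ, |θ| < θ₀ → ∀ i j,
        ‖(A θ - A₀ - (θ : ℂ) • A₁) i j‖ ≤ CA * θ ^ 2)
    (Ch : ℝ) (hh : ∀ θ : ℝ, |θ| < θ₀ → ∀ i,
        ‖h θ i - h₀ i - (θ : ℂ) * h₁ i‖ ≤ Ch * θ ^ 2)
    (horth : ∀ v ∈ LinearMap.ker A₀.conjTranspose.mulVecLin,
        dotProduct (star v) h₀ = 0) :
    ∃ C > 0, ∃ θ₁ > 0, ∀ θ : ℝ, θ ≠ 0 → |θ| < θ₁ →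
      ∀ c : Fin n → ℂ, (A θ).mulVec c = h θ → ∀ i, ‖c i‖ ≤ C := by
  obtain ⟨k, B, hB⟩ :=
    exists_mulVec_eq_zero_iff_forall_star_dotProduct_eq_zero (LinearMap.ker A₀ᴴ.mulVecLin)
  obtain ⟨C, θ₁, hθ₁, hC⟩ := exists_norm_le_of_norm_perturbed_sub_le
    (LinearMap.toContinuousLinearMap A₀.mulVecLin) (LinearMap.toContinuousLinearMap A₁.mulVecLin)
    (LinearMap.toContinuousLinearMap B.mulVecLin)
    (fun x => (hB _).2 fun v hv => star_dotProduct_mulVec_eq_zero_of_mem_ker hv x)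
    (fun u hu hBu => hnondeg u hu ((hB _).1 hBu)) ((hB h₀).2 horth) h₁
    (by positivity : (0 : ℝ) ≤ n * |CA|) (abs_nonneg Ch)
  refine ⟨max C 1, by positivity, min θ₀ θ₁, lt_min hθ₀ hθ₁, fun θ hθ hθ₁' c hc i => ?_⟩
  have hθ₀' : |θ| < θ₀ := hθ₁'.trans_le (min_le_left _ _)
  have hres := norm_mulVec_add_smul_mulVec_sub_le (a := |CA| * θ ^ 2) (b := |Ch| * θ ^ 2)
    (by positivity) (by positivity)
    (fun i j => (hA θ hθ₀' i j).trans (mul_le_mul_of_nonneg_right (le_abs_self CA) (sq_nonneg θ)))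
    (fun i => (hh θ hθ₀' i).trans (mul_le_mul_of_nonneg_right (le_abs_self Ch) (sq_nonneg θ))) hc
  have hnorm : ‖(θ : ℂ)‖ = |θ| := by rw [Complex.norm_real, Real.norm_eq_abs]
  refine (norm_le_pi_norm c i).trans ((hC θ c (by exact_mod_cast hθ) ?_ ?_).trans (le_max_left _ _))
  · rw [hnorm]; exact hθ₁'.trans_le (min_le_right _ _)
  · refine hres.trans_eq ?_
    rw [hnorm, sq_abs, Fintype.card_fin]
    ring

/-- Lyapunov–Schmidt lemma: if `A(θ) = A₀ + θ A₁ + O(θ²)` and `h(θ) = h₀ + θ h₁ + O(θ²)`,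
the zero eigenvalue of `A₀` is semisimple (`ℂⁿ = Null(A₀) ⊕ Range(A₀)`), `h₀ ⊥ Null(A₀*)`,
the restriction of `A₁` to `Null(A₀)` paired against `Null(A₀*)` is nondegenerate, and
`A(θ)` is invertible for small `θ ≠ 0`, then the unique solution `c(θ)` of
`A(θ) c = h(θ)` stays bounded as `θ → 0`. -/
theorem stmt_9 (n : ℕ) (A₀ A₁ : Matrix (Fin n) (Fin n) ℂ)
    (hcompl : IsCompl (LinearMap.ker A₀.mulVecLin) (LinearMap.range A₀.mulVecLin))
    (hnondeg : ∀ u ∈ LinearMap.ker A₀.mulVecLin,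
        (∀ v ∈ LinearMap.ker A₀.conjTranspose.mulVecLin,
            dotProduct (star v) (A₁.mulVec u) = 0) → u = 0)
    (θ₀ : ℝ) (hθ₀ : 0 < θ₀)
    (A : ℝ → Matrix (Fin n) (Fin n) ℂ) (h : ℝ → Fin n → ℂ) (h₀ h₁ : Fin n → ℂ)
    (CA : ℝ) (hA : ∀ θ : ℝ, |θ| < θ₀ → ∀ i j,
        ‖(A θ - A₀ - (θ : ℂ) • A₁) i j‖ ≤ CA * θ ^ 2)
    (Ch : ℝ) (hh : ∀ θ : ℝ, |θ| < θ₀ → ∀ i,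
        ‖h θ i - h₀ i - (θ : ℂ) * h₁ i‖ ≤ Ch * θ ^ 2)
    (horth : ∀ v ∈ LinearMap.ker A₀.conjTranspose.mulVecLin,
        dotProduct (star v) h₀ = 0)
    (hinv : ∀ θ : ℝ, θ ≠ 0 → |θ| < θ₀ → IsUnit (A θ)) :
    ∃ C > 0, ∃ θ₁ > 0, ∀ θ : ℝ, θ ≠ 0 → |θ| < θ₁ →
      ∀ c : Fin n → ℂ, (A θ).mulVec c = h θ → ∀ i, ‖c i‖ ≤ C :=
  stmt_9_general n A₀ A₁ hnondeg θ₀ hθ₀ A h h₀ h₁ CA hA Ch hh horth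
end

section
/- Let M_+ be the N×N all-ones matrix and A₀ = [[-(1+p)M_+, -pM_+],[-pI, (1-p)I]] for an integer p ≥ 1. Then u = (u₁, u₂) ∈ ℂ^N × ℂ^N belongs to Null(A₀) if and only if u₁ = (1-p)w and u₂ = pw for some w ∈ Null(M_+). In particular dim Null(A₀) = N - 1. -/
/-!
The second block row of `A₀ u = 0` reads `-c u₁ + (1 - c) u₂ = 0`, so for `c ≠ 0` every kernel
vector is `u = ((1 - c) w, c w)` with `w = c⁻¹ u₂`. On such vectors the first block row becomes
`(-(1 + c)(1 - c) - c²) J w = -J w`, so `A₀ u = 0` exactly when `J w = 0`. The lift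
`w ↦ ((1 - c) w, c w)` is injective, hence `dim Null(A₀) = dim Null(J)`, and for the all-ones
matrix `J` the null space is the kernel of the nonzero functional `w ↦ ∑ i, w i`.
-/

open Matrix

section

variable {K n : Type*} [Field K] [Fintype n]

theorem ker_mulVecLin_allOnes [Nonempty n] :
    LinearMap.ker (of fun _ _ => (1 : K) : Matrix n n K).mulVecLin =
      LinearMap.ker (Fintype.linearCombination K fun _ : n => (1 : K)) := by
  ext w
  simp [funext_iff, mulVec, dotProduct, Fintype.linearCombination_apply]

theorem finrank_ker_mulVecLin_allOnes [Nonempty n] :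
    Module.finrank K (LinearMap.ker (of fun _ _ => (1 : K) : Matrix n n K).mulVecLin) =
      Fintype.card n - 1 := by
  classical
  have hf : Fintype.linearCombination K (fun _ : n => (1 : K)) ≠ 0 := by
    intro h
    simpa [Fintype.linearCombination_apply] using
      LinearMap.congr_fun h (Pi.single (Classical.arbitrary n) 1)
  rw [ker_mulVecLin_allOnes, ← Module.finrank_fintype_fun_eq_card K,
    ← Module.Dual.finrank_ker_add_one_of_ne_zero hf, Nat.add_sub_cancel]

variable [DecidableEq n]

/-- With `c = p` and `J = M₊` this is `A₀`. -/
def bandEdgeMatrix (c : K) (J : Matrix n n K) : Matrix (n ⊕ n) (n ⊕ n) K :=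
  fromBlocks (-(1 + c) • J) (-c • J) (-c • 1) ((1 - c) • 1)

def bandEdgeLift (c : K) : Matrix (n ⊕ n) n K :=
  fromRows ((1 - c) • 1) (c • 1)

theorem bandEdgeLift_mulVec (c : K) (w : n → K) :
    bandEdgeLift c *ᵥ w = Sum.elim ((1 - c) • w) (c • w) := by
  simp [bandEdgeLift, fromRows_mulVec, smul_mulVec]

theorem bandEdgeLift_mulVec_eq_iff (c : K) (w : n → K) (u : n ⊕ n → K) :
    bandEdgeLift c *ᵥ w = u ↔
      (∀ i, u (Sum.inl i) = (1 - c) * w i) ∧ ∀ i, u (Sum.inr i) = c * w i := by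
  simp [bandEdgeLift_mulVec, funext_iff, Sum.forall, eq_comm]

theorem bandEdgeMatrix_mulVec (c : K) (J : Matrix n n K) (u : n ⊕ n → K) :
    bandEdgeMatrix c J *ᵥ u =
      Sum.elim (-(1 + c) • (J *ᵥ (u ∘ Sum.inl)) + -c • (J *ᵥ (u ∘ Sum.inr)))
        (-c • (u ∘ Sum.inl) + (1 - c) • (u ∘ Sum.inr)) := by
  simp only [bandEdgeMatrix, fromBlocks_mulVec, smul_mulVec, one_mulVec]

theorem bandEdgeMatrix_mulVec_bandEdgeLift_mulVec (c : K) (J : Matrix n n K) (w : n → K) :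
    bandEdgeMatrix c J *ᵥ (bandEdgeLift c *ᵥ w) = Sum.elim (-(J *ᵥ w)) 0 := by
  rw [bandEdgeMatrix_mulVec, bandEdgeLift_mulVec, Sum.elim_comp_inl, Sum.elim_comp_inr,
    mulVec_smul, mulVec_smul]
  congr 1 <;> module

theorem bandEdgeLift_mulVec_injective {c : K} (hc : c ≠ 0) :
    Function.Injective (bandEdgeLift c *ᵥ · : (n → K) → n ⊕ n → K) := by
  intro v w h
  simp only [bandEdgeLift_mulVec, Sum.elim_eq_iff] at h
  exact smul_right_injective _ hc h.2

theorem eq_bandEdgeLift_mulVec_of_mulVec_eq_zero {c : K} (hc : c ≠ 0) {J : Matrix n n K}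
    {u : n ⊕ n → K} (hu : bandEdgeMatrix c J *ᵥ u = 0) :
    u = bandEdgeLift c *ᵥ (c⁻¹ • (u ∘ Sum.inr)) := by
  have h₂ : -c • (u ∘ Sum.inl) + (1 - c) • (u ∘ Sum.inr) = 0 := by
    simpa [bandEdgeMatrix_mulVec] using congrArg (· ∘ Sum.inr) hu
  rw [bandEdgeLift_mulVec, ← Sum.elim_comp_inl_inr u, Sum.elim_comp_inr, Sum.elim_eq_iff]
  constructor
  · apply smul_right_injective _ hc
    dsimp only
    rw [smul_smul, smul_smul, mul_right_comm, mul_inv_cancel₀ hc, one_mul]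
    linear_combination (norm := module) -h₂
  · rw [smul_smul, mul_inv_cancel₀ hc, one_smul]

theorem bandEdgeMatrix_mulVec_eq_zero_iff {c : K} (hc : c ≠ 0) (J : Matrix n n K)
    (u : n ⊕ n → K) :
    bandEdgeMatrix c J *ᵥ u = 0 ↔ ∃ w, J *ᵥ w = 0 ∧ bandEdgeLift c *ᵥ w = u := by
  constructor
  · intro hu
    have hu_eq := eq_bandEdgeLift_mulVec_of_mulVec_eq_zero hc hu
    refine ⟨c⁻¹ • (u ∘ Sum.inr), ?_, hu_eq.symm⟩
    rw [hu_eq, bandEdgeMatrix_mulVec_bandEdgeLift_mulVec] at hu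
    simpa using congrArg (· ∘ Sum.inl) hu
  · rintro ⟨w, hw, rfl⟩
    rw [bandEdgeMatrix_mulVec_bandEdgeLift_mulVec, hw, neg_zero, Sum.elim_zero_zero]

theorem ker_bandEdgeMatrix {c : K} (hc : c ≠ 0) (J : Matrix n n K) :
    LinearMap.ker (bandEdgeMatrix c J).mulVecLin =
      (LinearMap.ker J.mulVecLin).map (bandEdgeLift c).mulVecLin := by
  ext u
  simp [bandEdgeMatrix_mulVec_eq_zero_iff hc]

theorem finrank_ker_bandEdgeMatrix {c : K} (hc : c ≠ 0) (J : Matrix n n K) :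
    Module.finrank K (LinearMap.ker (bandEdgeMatrix c J).mulVecLin) =
      Module.finrank K (LinearMap.ker J.mulVecLin) := by
  rw [ker_bandEdgeMatrix hc]
  exact (Submodule.equivMapOfInjective _ (bandEdgeLift_mulVec_injective hc) _).finrank_eq.symm

end

/-- For `M₊` the all-ones matrix and `A₀ = [[-(1+p)M₊, -pM₊], [-pI, (1-p)I]]` with `p ≥ 1`,
the kernel of `A₀` consists exactly of vectors `((1-p) w, p w)` with `w ∈ Null(M₊)`,
and has dimension `N - 1`. -/
theorem stmt_11 (N : ℕ) (hN : 1 ≤ N) (p : ℕ) (hp : 1 ≤ p)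
    (M : Matrix (Fin N) (Fin N) ℂ) (hM : M = Matrix.of fun _ _ => (1 : ℂ))
    (A₀ : Matrix (Fin N ⊕ Fin N) (Fin N ⊕ Fin N) ℂ)
    (hA₀ : A₀ = Matrix.fromBlocks (-(1 + (p : ℂ)) • M) (-(p : ℂ) • M)
      (-(p : ℂ) • (1 : Matrix (Fin N) (Fin N) ℂ))
      ((1 - (p : ℂ)) • (1 : Matrix (Fin N) (Fin N) ℂ))) :
    (∀ u : Fin N ⊕ Fin N → ℂ,
        A₀.mulVec u = 0 ↔
          ∃ w : Fin N → ℂ, M.mulVec w = 0 ∧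
            (∀ i, u (Sum.inl i) = (1 - (p : ℂ)) * w i) ∧
            (∀ i, u (Sum.inr i) = (p : ℂ) * w i)) ∧
      Module.finrank ℂ (LinearMap.ker A₀.mulVecLin) = N - 1 := by
  have hp₀ : (p : ℂ) ≠ 0 := Nat.cast_ne_zero.mpr (by omega)
  have : Nonempty (Fin N) := ⟨⟨0, hN⟩⟩
  change A₀ = bandEdgeMatrix (p : ℂ) M at hA₀
  subst hA₀
  refine ⟨fun u => ?_, ?_⟩
  · simp only [bandEdgeMatrix_mulVec_eq_zero_iff hp₀, bandEdgeLift_mulVec_eq_iff]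
  · rw [finrank_ker_bandEdgeMatrix hp₀, hM, finrank_ker_mulVecLin_allOnes, Fintype.card_fin]
end
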